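/- Any continuous nonnegative functional J on ℝⁿ of the form J(b) = ∫_a^b |γ(y,b)''(x)| dx (with fixed nodal values y) is coercive on the quotient by constant shifts: J(b) → ∞ as the variation max_i bᵢ − min_i bᵢ → ∞; consequently the minimization of J over b ∈ ℝⁿ attains its infimum. -/

import Mathlib

open Set MeasureTheory Filter

noncomputable section

/-- A function is a cubic polynomial on a set. -/
def IsCubicOn (γ : ℝ → ℝ) (s : Set ℝ) : Prop :=
  ∃ p : Polynomial ℝ, p.natDegree ≤ 3 ∧ ∀ t ∈ s, γ t = p.eval t

/-- `γ` is a C¹ cubic Hermite spline on `[x 0, x n]` with nodes `x 0 < ⋯ < x n`. -/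
def IsHermiteSpline {n : ℕ} (x : Fin (n + 1) → ℝ) (γ : ℝ → ℝ) : Prop :=
  ContDiffOn ℝ 1 γ (Set.Icc (x 0) (x (Fin.last n))) ∧
    ∀ i : Fin n, IsCubicOn γ (Set.Icc (x i.castSucc) (x i.succ))

/-- The L¹ norm of the second derivative of `γ` over `[x 0, x n]`. -/
def L1E {n : ℕ} (x : Fin (n + 1) → ℝ) (γ : ℝ → ℝ) : ℝ :=
  ∫ t in (x 0)..(x (Fin.last n)), |deriv (deriv γ) t|

/-- `F_x`: union over all nodal data `y` of the minimizers of `∫|γ''|` among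
splines interpolating `y`; equivalently, the splines that minimize `∫|γ''|`
among all splines with the same nodal values. -/
def Fx {n : ℕ} (x : Fin (n + 1) → ℝ) : Set (ℝ → ℝ) :=
  {γ | IsHermiteSpline x γ ∧
    ∀ δ, IsHermiteSpline x δ → (∀ i, δ (x i) = γ (x i)) → L1E x γ ≤ L1E x δ}

/-!
On each subinterval a spline is the unique cubic with its Hermite data (a cubic with double
roots at two distinct points vanishes), so there `γ''` is an explicit affine function of the
two nodal slopes and `J` is a continuous function of `b`. By the mean value theorem `γ'` takes
the secant slope `sᵢ` somewhere in the `i`-th piece, so both nodal slopes of the piece are within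
`∫ |γ''|` over that piece of `sᵢ`. Hence `‖b‖ ≤ J b + ∑ |sᵢ|`: `J` is coercive, and being
continuous on a finite-dimensional space it attains its minimum.
-/

open Polynomial

theorem Polynomial.eq_zero_of_natDegree_le_three_of_double_roots {K : Type*} [Field K] {a b : K}
    (hab : a ≠ b) {p : K[X]} (hp : p.natDegree ≤ 3) (ha : p.IsRoot a) (hb : p.IsRoot b)
    (ha' : p.derivative.IsRoot a) (hb' : p.derivative.IsRoot b) : p = 0 := by
  by_contra h0
  have hdvd : (X - C a) ^ 2 * (X - C b) ^ 2 ∣ p :=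
    (isCoprime_X_sub_C_of_isUnit_sub (sub_ne_zero.2 hab).isUnit).pow.mul_dvd
      ((le_rootMultiplicity_iff h0).1 ((one_lt_rootMultiplicity_iff_isRoot h0).2 ⟨ha, ha'⟩))
      ((le_rootMultiplicity_iff h0).1 ((one_lt_rootMultiplicity_iff_isRoot h0).2 ⟨hb, hb'⟩))
  have hdeg := natDegree_le_of_dvd hdvd h0
  rw [natDegree_mul (pow_ne_zero _ (X_sub_C_ne_zero a)) (pow_ne_zero _ (X_sub_C_ne_zero b)),
    natDegree_pow, natDegree_pow, natDegree_X_sub_C, natDegree_X_sub_C] at hdeg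
  omega

/-- The cubic with values `ya, yb` and slopes `da, db` at `a, b` (meaningful for `a ≠ b`). -/
def hermiteCubic (a b ya yb da db : ℝ) : ℝ[X] :=
  C ya + C da * (X - C a) + C ((3 * (yb - ya) / (b - a) - 2 * da - db) / (b - a)) * (X - C a) ^ 2
    + C ((da + db - 2 * (yb - ya) / (b - a)) / (b - a) ^ 2) * (X - C a) ^ 3

def hermiteSecondDeriv (a b ya yb da db t : ℝ) : ℝ :=
  2 * ((3 * (yb - ya) / (b - a) - 2 * da - db) / (b - a))
    + 6 * ((da + db - 2 * (yb - ya) / (b - a)) / (b - a) ^ 2) * (t - a)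

section Hermite

variable {a b ya yb da db : ℝ}

theorem natDegree_hermiteCubic_le : (hermiteCubic a b ya yb da db).natDegree ≤ 3 := by
  unfold hermiteCubic; compute_degree

theorem derivative_hermiteCubic :
    derivative (hermiteCubic a b ya yb da db) =
      C da + C (2 * ((3 * (yb - ya) / (b - a) - 2 * da - db) / (b - a))) * (X - C a)
        + C (3 * ((da + db - 2 * (yb - ya) / (b - a)) / (b - a) ^ 2)) * (X - C a) ^ 2 := by
  simp only [hermiteCubic, derivative_add, derivative_mul, derivative_C, derivative_pow,
    derivative_sub, derivative_X, C_mul]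
  push_cast; ring

theorem eval_derivative_derivative_hermiteCubic (t : ℝ) :
    (hermiteCubic a b ya yb da db).derivative.derivative.eval t =
      hermiteSecondDeriv a b ya yb da db t := by
  simp only [derivative_hermiteCubic, derivative_add, derivative_mul, derivative_C,
    derivative_pow, derivative_sub, derivative_X, eval_add, eval_mul, eval_C, eval_sub, eval_X,
    eval_pow, eval_zero, eval_one, hermiteSecondDeriv]
  push_cast; ring

theorem eval_hermiteCubic_left : (hermiteCubic a b ya yb da db).eval a = ya := by
  simp [hermiteCubic]

theorem eval_derivative_hermiteCubic_left :
    (hermiteCubic a b ya yb da db).derivative.eval a = da := by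
  simp [derivative_hermiteCubic]

theorem eval_hermiteCubic_right (hab : a ≠ b) : (hermiteCubic a b ya yb da db).eval b = yb := by
  have : b - a ≠ 0 := sub_ne_zero.2 hab.symm
  simp only [hermiteCubic, eval_add, eval_mul, eval_pow, eval_sub, eval_C, eval_X]
  field_simp; ring

theorem eval_derivative_hermiteCubic_right (hab : a ≠ b) :
    (hermiteCubic a b ya yb da db).derivative.eval b = db := by
  have : b - a ≠ 0 := sub_ne_zero.2 hab.symm
  simp only [derivative_hermiteCubic, eval_add, eval_mul, eval_pow, eval_sub, eval_C, eval_X]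
  field_simp; ring

theorem Polynomial.eq_hermiteCubic (hab : a ≠ b) {p : ℝ[X]} (hp : p.natDegree ≤ 3) :
    p = hermiteCubic a b (p.eval a) (p.eval b) (p.derivative.eval a) (p.derivative.eval b) := by
  refine sub_eq_zero.1 (eq_zero_of_natDegree_le_three_of_double_roots hab
    ((natDegree_sub_le _ _).trans (max_le hp natDegree_hermiteCubic_le)) ?_ ?_ ?_ ?_) <;>
  simp [eval_hermiteCubic_left, eval_hermiteCubic_right hab, eval_derivative_hermiteCubic_left,
    eval_derivative_hermiteCubic_right hab]

theorem continuous_hermiteSecondDeriv (a b ya yb da db : ℝ) :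
    Continuous (hermiteSecondDeriv a b ya yb da db) := by
  unfold hermiteSecondDeriv; fun_prop

end Hermite

theorem abs_sub_slope_le_integral_abs {f f' f'' : ℝ → ℝ} {a b c : ℝ} (hab : a < b)
    (hc : c ∈ Icc a b) (hf : ∀ t, HasDerivAt f (f' t) t) (hf' : ∀ t, HasDerivAt f' (f'' t) t)
    (hf'' : IntervalIntegrable f'' volume a b) :
    |f' c - (f b - f a) / (b - a)| ≤ ∫ t in a..b, |f'' t| := by
  obtain ⟨ξ, hξ, hslope⟩ := exists_hasDerivAt_eq_slope f f' hab
    (fun t _ => (hf t).continuousAt.continuousWithinAt) fun t _ => hf t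
  have hsub : uIcc ξ c ⊆ uIcc a b :=
    uIcc_subset_uIcc (Icc_subset_uIcc (Ioo_subset_Icc_self hξ)) (Icc_subset_uIcc hc)
  rw [← hslope, ← intervalIntegral.integral_eq_sub_of_hasDerivAt (fun t _ => hf' t)
    (hf''.mono_set hsub)]
  calc |∫ t in ξ..c, f'' t|
      ≤ |(∫ t in ξ..c, |f'' t|)| := by
        simpa only [Real.norm_eq_abs] using
          intervalIntegral.norm_integral_le_abs_integral_norm (f := f'') (μ := volume)
    _ ≤ |(∫ t in a..b, |f'' t|)| := intervalIntegral.abs_integral_mono_interval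
        (uIoc_subset_uIoc_of_uIcc_subset_uIcc hsub) (Eventually.of_forall fun t => abs_nonneg _)
        hf''.abs
    _ = ∫ t in a..b, |f'' t| :=
        abs_of_nonneg (intervalIntegral.integral_nonneg hab.le fun t _ => abs_nonneg _)

theorem abs_sub_slope_le_integral_abs_hermiteSecondDeriv {a b ya yb da db : ℝ} (hab : a < b) :
    |da - (yb - ya) / (b - a)| ≤ ∫ t in a..b, |hermiteSecondDeriv a b ya yb da db t| ∧
      |db - (yb - ya) / (b - a)| ≤ ∫ t in a..b, |hermiteSecondDeriv a b ya yb da db t| := by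
  set Q := hermiteCubic a b ya yb da db
  have hQ'' : ∀ t, HasDerivAt (fun s => Q.derivative.eval s)
      (hermiteSecondDeriv a b ya yb da db t) t := fun t => by
    simpa only [Q, eval_derivative_derivative_hermiteCubic] using Q.derivative.hasDerivAt t
  have hbound := fun c (hc : c ∈ Icc a b) => abs_sub_slope_le_integral_abs hab hc Q.hasDerivAt
    hQ'' ((continuous_hermiteSecondDeriv ..).intervalIntegrable a b)
  simp only [Q, eval_hermiteCubic_left, eval_hermiteCubic_right hab.ne] at hbound
  exact ⟨by simpa only [eval_derivative_hermiteCubic_left] using hbound a ⟨le_rfl, hab.le⟩,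
    by simpa only [eval_derivative_hermiteCubic_right hab.ne] using hbound b ⟨hab.le, le_rfl⟩⟩

section CubicPiece

variable {γ : ℝ → ℝ} {a b : ℝ}

theorem IsCubicOn.eqOn_hermiteCubic (hab : a < b) (hγ : IsCubicOn γ (Icc a b)) :
    EqOn γ (fun t => (hermiteCubic a b (γ a) (γ b) (derivWithin γ (Icc a b) a)
      (derivWithin γ (Icc a b) b)).eval t) (Icc a b) := by
  obtain ⟨p, hdeg, hp⟩ := hγ
  have hderiv : ∀ s ∈ Icc a b, derivWithin γ (Icc a b) s = p.derivative.eval s := fun s hs => by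
    rw [derivWithin_congr hp (hp s hs),
      p.differentiable.differentiableAt.derivWithin (uniqueDiffOn_Icc hab s hs), p.deriv]
  intro t ht
  rw [hp t ht, hp a (left_mem_Icc.2 hab.le), hp b (right_mem_Icc.2 hab.le),
    hderiv a (left_mem_Icc.2 hab.le), hderiv b (right_mem_Icc.2 hab.le),
    ← p.eq_hermiteCubic hab.ne hdeg]

theorem IsCubicOn.deriv_deriv_eq_hermiteSecondDeriv (hab : a < b) (hγ : IsCubicOn γ (Icc a b)) :
    EqOn (deriv (deriv γ)) (hermiteSecondDeriv a b (γ a) (γ b) (derivWithin γ (Icc a b) a)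
      (derivWithin γ (Icc a b) b)) (Ioo a b) := by
  intro t ht
  set Q := hermiteCubic a b (γ a) (γ b) (derivWithin γ (Icc a b) a) (derivWithin γ (Icc a b) b)
  have hloc : γ =ᶠ[nhds t] fun s => Q.eval s :=
    Filter.eventuallyEq_of_mem (Ioo_mem_nhds ht.1 ht.2)
      fun s hs => hγ.eqOn_hermiteCubic hab (Ioo_subset_Icc_self hs)
  have hQ' : deriv (fun s => Q.eval s) = fun s => Q.derivative.eval s := funext fun _ => Q.deriv
  rw [hloc.deriv.deriv_eq, hQ', Q.derivative.deriv, eval_derivative_derivative_hermiteCubic]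

end CubicPiece

theorem intervalIntegral.sum_integral_adjacent_intervals_fin {E : Type*} [NormedAddCommGroup E]
    [NormedSpace ℝ E] {μ : Measure ℝ} {f : ℝ → E} {n : ℕ} {x : Fin (n + 1) → ℝ}
    (hf : ∀ i : Fin n, IntervalIntegrable f μ (x i.castSucc) (x i.succ)) :
    ∑ i : Fin n, ∫ t in x i.castSucc..x i.succ, f t ∂μ = ∫ t in x 0..x (Fin.last n), f t ∂μ := by
  let X : ℕ → ℝ := fun k => x ⟨min k n, Nat.lt_succ_of_le (min_le_right k n)⟩
  have hX : ∀ k (hk : k < n), X k = x (Fin.castSucc ⟨k, hk⟩) ∧ X (k + 1) = x (Fin.succ ⟨k, hk⟩) :=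
    fun k hk => ⟨congrArg x (Fin.ext (min_eq_left hk.le)), congrArg x (Fin.ext (min_eq_left hk))⟩
  have hsum := sum_integral_adjacent_intervals (μ := μ) (f := f) (a := X) (n := n) fun k hk => by
    simpa only [hX k hk] using hf ⟨k, hk⟩
  rw [← Fin.sum_univ_eq_sum_range (fun k => ∫ t in X k..X (k + 1), f t ∂μ)] at hsum
  convert hsum using 2 with i
  · rw [(hX i i.isLt).1, (hX i i.isLt).2]
  · exact congrArg x (Fin.ext (by simp))
  · exact congrArg x (Fin.ext (by simp))

section Energy

variable {n : ℕ}

def hermiteEnergy (x y b : Fin (n + 1) → ℝ) : ℝ :=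
  ∑ i : Fin n, ∫ t in x i.castSucc..x i.succ, |hermiteSecondDeriv (x i.castSucc) (x i.succ)
    (y i.castSucc) (y i.succ) (b i.castSucc) (b i.succ) t|

theorem continuous_hermiteEnergy (x y : Fin (n + 1) → ℝ) : Continuous (hermiteEnergy x y) := by
  refine continuous_finsetSum _ fun i _ => ?_
  apply intervalIntegral.continuous_parametric_intervalIntegral_of_continuous'
  unfold hermiteSecondDeriv
  fun_prop

theorem norm_le_hermiteEnergy_add {x : Fin (n + 1) → ℝ} (hn : 1 ≤ n) (hx : StrictMono x)
    (y b : Fin (n + 1) → ℝ) :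
    ‖b‖ ≤ hermiteEnergy x y b +
      ∑ i : Fin n, |(y i.succ - y i.castSucc) / (x i.succ - x i.castSucc)| := by
  obtain ⟨m, rfl⟩ : ∃ m, n = m + 1 := ⟨n - 1, by omega⟩
  set K := ∑ i : Fin (m + 1), |(y i.succ - y i.castSucc) / (x i.succ - x i.castSucc)|
  have hpiece : ∀ i : Fin (m + 1),
      |b i.castSucc| ≤ hermiteEnergy x y b + K ∧ |b i.succ| ≤ hermiteEnergy x y b + K := by
    intro i
    set s := (y i.succ - y i.castSucc) / (x i.succ - x i.castSucc)
    have hE : _ ≤ hermiteEnergy x y b := Finset.single_le_sum (fun j _ =>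
      intervalIntegral.integral_nonneg (hx j.castSucc_lt_succ).le fun _ _ => abs_nonneg _)
      (Finset.mem_univ i)
    have hs : |s| ≤ K := Finset.single_le_sum (f := fun j : Fin (m + 1) =>
      |(y j.succ - y j.castSucc) / (x j.succ - x j.castSucc)|) (fun j _ => abs_nonneg _)
      (Finset.mem_univ i)
    obtain ⟨hleft, hright⟩ :=
      abs_sub_slope_le_integral_abs_hermiteSecondDeriv (ya := y i.castSucc) (yb := y i.succ)
        (da := b i.castSucc) (db := b i.succ) (hx i.castSucc_lt_succ)
    constructor
    · linarith [abs_sub_abs_le_abs_sub (b i.castSucc) s]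
    · linarith [abs_sub_abs_le_abs_sub (b i.succ) s]
  refine (pi_norm_le_iff_of_nonneg ((abs_nonneg _).trans (hpiece 0).1)).2 fun j => ?_
  rcases Fin.eq_castSucc_or_eq_last j with ⟨i, rfl⟩ | rfl
  · exact (hpiece i).1
  · exact Fin.succ_last m ▸ (hpiece (Fin.last m)).2

theorem IsHermiteSpline.L1E_eq_hermiteEnergy {x y b : Fin (n + 1) → ℝ} {γ : ℝ → ℝ}
    (hx : StrictMono x) (hγ : IsHermiteSpline x γ) (hy : ∀ i, γ (x i) = y i)
    (hb : ∀ i, derivWithin γ (Icc (x 0) (x (Fin.last n))) (x i) = b i) :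
    L1E x γ = hermiteEnergy x y b := by
  have hab : ∀ i : Fin n, x i.castSucc < x i.succ := fun i => hx i.castSucc_lt_succ
  have hsub : ∀ i : Fin n, Icc (x i.castSucc) (x i.succ) ⊆ Icc (x 0) (x (Fin.last n)) := fun i =>
    Icc_subset_Icc (hx.monotone (Fin.zero_le _)) (hx.monotone (Fin.le_last _))
  have hderiv : ∀ (i : Fin n) (j), x j ∈ Icc (x i.castSucc) (x i.succ) →
      derivWithin γ (Icc (x i.castSucc) (x i.succ)) (x j) = b j := fun i j hj => by
    rw [derivWithin_subset (hsub i) (uniqueDiffOn_Icc (hab i) _ hj)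
      ((hγ.1.differentiableOn one_ne_zero) _ (hsub i hj)), hb j]
  have hpiece : ∀ i : Fin n, EqOn (fun t => |deriv (deriv γ) t|)
      (fun t => |hermiteSecondDeriv (x i.castSucc) (x i.succ) (y i.castSucc) (y i.succ)
        (b i.castSucc) (b i.succ) t|) (Ioo (x i.castSucc) (x i.succ)) := fun i t ht => by
    dsimp only
    rw [(hγ.2 i).deriv_deriv_eq_hermiteSecondDeriv (hab i) ht, hy, hy,
      hderiv i _ (left_mem_Icc.2 (hab i).le), hderiv i _ (right_mem_Icc.2 (hab i).le)]
  unfold L1E hermiteEnergy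
  rw [← intervalIntegral.sum_integral_adjacent_intervals_fin]
  · exact Finset.sum_congr rfl fun i _ =>
      intervalIntegral.integral_congr_Ioo_of_le (hab i).le (hpiece i)
  · exact fun i => (intervalIntegrable_congr_uIoo (uIoo_of_le (hab i).le ▸ hpiece i)).2
      ((continuous_hermiteSecondDeriv ..).abs.intervalIntegrable _ _)

end Energy

/-- With fixed nodal values `y`, the functional `b ↦ ∫ |γ(y,b)''|` blows up as
the variation `max bᵢ − min bᵢ` tends to infinity, and consequently attains
its infimum over `b ∈ ℝⁿ`. -/
theorem stmt13 {n : ℕ} (hn : 1 ≤ n) (x : Fin (n + 1) → ℝ) (hx : StrictMono x)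
    (y : Fin (n + 1) → ℝ) (Γ : (Fin (n + 1) → ℝ) → ℝ → ℝ)
    (hΓ : ∀ b, IsHermiteSpline x (Γ b) ∧ (∀ i, Γ b (x i) = y i) ∧
      ∀ i, derivWithin (Γ b) (Set.Icc (x 0) (x (Fin.last n))) (x i) = b i) :
    (∀ C : ℝ, ∃ M : ℝ, ∀ b : Fin (n + 1) → ℝ,
        (∃ i j, M ≤ b i - b j) → C ≤ L1E x (Γ b)) ∧
    ∃ bstar : Fin (n + 1) → ℝ, ∀ b : Fin (n + 1) → ℝ,
      L1E x (Γ bstar) ≤ L1E x (Γ b) := by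
  have hJ : ∀ b, L1E x (Γ b) = hermiteEnergy x y b := fun b =>
    (hΓ b).1.L1E_eq_hermiteEnergy hx (hΓ b).2.1 (hΓ b).2.2
  set K := ∑ i : Fin n, |(y i.succ - y i.castSucc) / (x i.succ - x i.castSucc)|
  have hbound : ∀ b, ‖b‖ ≤ hermiteEnergy x y b + K := fun b => norm_le_hermiteEnergy_add hn hx y b
  refine ⟨fun C => ⟨2 * C + 2 * K, fun b ⟨i, j, hij⟩ => ?_⟩, ?_⟩
  · have hi := (le_abs_self (b i)).trans (norm_le_pi_norm b i)
    have hj := (neg_abs_le (b j)).trans' (neg_le_neg (norm_le_pi_norm b j))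
    rw [hJ]
    linarith [hbound b]
  · have hcoercive : Tendsto (hermiteEnergy x y) (cocompact _) atTop :=
      tendsto_atTop_mono (fun b => sub_le_iff_le_add.2 (hbound b))
        (tendsto_atTop_add_const_right _ (-K) tendsto_norm_cocompact_atTop)
    obtain ⟨bstar, hmin⟩ := (continuous_hermiteEnergy x y).exists_forall_le hcoercive
    exact ⟨bstar, fun b => by simpa only [hJ] using hmin b⟩
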